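/- Each Demazure–Whittaker operator T_i maps the subring ℂ[Λ] ⊂ K into itself: for every f ∈ ℂ[Λ], T_i f ∈ ℂ[Λ]. (Theorem 2.4(iii) of 'Hecke Modules from Metaplectic Ice': the representation on 𝒪(T̂_reg(ℂ)) induces an action on 𝒪(T̂(ℂ)); the point is the divisibility of the numerator of T_i f by 1 − z^{α_i∨}, using that ⟨α_i, λ⟩ ∈ ℤ for all λ ∈ Λ.) -/

import Mathlib

/-!
Theorem 2.4 (i) of "Hecke Modules from Metaplectic Ice" (Hecke relations for the
Demazure–Whittaker operators).

Setting: `Λ` is a free abelian group of finite rank containing a reduced crystallographic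
root system `Φ` with simple coroots `α i`, Weyl group `W` generated by the simple
reflections `s i` (acting on `Λ` via `σ`).  `K` is the fraction field of the group algebra
`ℂ[Λ]`: we encode this by a field `K` which is a `ℂ`-algebra together with a homomorphism
`ζ : Λ → Kˣ` (written additively-to-multiplicatively) whose values are linearly independent
over `ℂ` (so `ℂ[Λ] ⊆ K`), and a `W`-action `τ` on `K` by `ℂ`-algebra automorphisms with
`τ w (ζ λ) = ζ (w λ)`.  The Demazure–Whittaker operator is
`T_i f = ((1−v)z^{α_i}/(1−z^{α_i}))·f + ((1−v z^{α_i})/(1−z^{−α_i}))·(s_i·f)`.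
-/

noncomputable section

/-- Alternating composite: `altComp f g m = ⋯ ∘ g ∘ f` with `m` factors, rightmost `f`. -/
def altComp {E : Type*} [AddCommGroup E] [Module ℂ E] (f g : E →ₗ[ℂ] E) : ℕ → (E →ₗ[ℂ] E)
  | 0 => LinearMap.id
  | m + 1 => altComp g f m ∘ₗ f

/-- The Demazure–Whittaker operator
`T_i f = ((1−v)z^{α_i}/(1−z^{α_i}))·f + ((1−v z^{α_i})/(1−z^{−α_i}))·(s_i·f)`. -/
def demWhit {Λ W K : Type*} [AddCommGroup Λ] [Group W] [Field K] [Algebra ℂ K]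
    {r : ℕ} (ζ : Λ → K) (τ : W →* (K ≃ₐ[ℂ] K)) (s : Fin r → W) (α : Fin r → Λ)
    (v : ℂ) (i : Fin r) : K →ₗ[ℂ] K where
  toFun f := ((1 - algebraMap ℂ K v) * ζ (α i) / (1 - ζ (α i))) * f
      + ((1 - algebraMap ℂ K v * ζ (α i)) / (1 - ζ (-α i))) * τ (s i) f
  map_add' f g := by simp only [map_add]; ring
  map_smul' c f := by
    simp only [Algebra.smul_def, map_mul, AlgEquiv.commutes, RingHom.id_apply]
    ring

/-- The group structure on `A ≃+ A` (composition), as `AddAut.group` provided in older Mathlib. -/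
instance addEquivSelfGroupOld (A : Type*) [Add A] : Group (A ≃+ A) :=
  inferInstanceAs (Group (Multiplicative (AddAut A)))

/-!
Write `a = z^{α_i}`. Since `z^{-α_i} = a⁻¹`, the operator splits as
`T_i = (1 - v) a D_i - v a s_i` with the Demazure operator `D_i f = (f - s_i f) / (1 - a)`.
As `s_i z^μ = z^{μ - n α_i}` with `n = ⟨α_i, μ⟩ ∈ ℤ`, we get
`D_i z^μ = -z^{μ - n α_i} (1 - a^n) / (1 - a)`, and `1 - a^n` is `1 - a` times a Laurent
polynomial in `a` (a geometric sum, also for `n < 0`).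
Hence `D_i` and `s_i`, and so `T_i`, preserve `ℂ[Λ]`.
-/

section

open Submodule Set
variable {Λ R K : Type*} [AddCommGroup Λ] [CommRing R]

def demazure [Field K] [Algebra R K] (a : K) (g : K →ₐ[R] K) : K →ₗ[R] K where
  toFun f := (f - g f) / (1 - a)
  map_add' f f' := by rw [map_add]; ring
  map_smul' c f := by rw [map_smul, ← smul_sub, smul_div_assoc, RingHom.id_apply]

theorem demWhit_eq {W : Type*} [Group W] [Field K] [Algebra ℂ K] {r : ℕ} (ζ : Λ → K)
    (τ : W →* (K ≃ₐ[ℂ] K)) (s : Fin r → W) (α : Fin r → Λ) (v : ℂ) (i : Fin r)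
    (hne : ζ (α i) ≠ 1) (hinv : ζ (-α i) * ζ (α i) = 1) (f : K) :
    demWhit ζ τ s α v i f = (1 - v) • (ζ (α i) * demazure (ζ (α i)) (τ (s i) : K →ₐ[ℂ] K) f)
      - v • (ζ (α i) * τ (s i) f) := by
  have h1 : 1 - ζ (α i) ≠ 0 := sub_ne_zero.2 hne.symm
  have h2 : 1 - ζ (-α i) ≠ 0 := by
    refine sub_ne_zero.2 fun h => hne ?_
    rwa [← h, one_mul] at hinv
  simp only [demWhit, demazure, LinearMap.coe_mk, AddHom.coe_mk, AlgEquiv.coe_toAlgHom,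
    Algebra.smul_def, map_sub, map_one]
  field_simp
  linear_combination (algebraMap ℂ K v * ζ (α i) - 1) * τ (s i) f * hinv

namespace AddChar

theorem mul_mem_span_range [CommRing K] [Algebra R K] (ψ : AddChar Λ K) {x y : K}
    (hx : x ∈ span R (range ψ)) (hy : y ∈ span R (range ψ)) : x * y ∈ span R (range ψ) := by
  have hclosure : (Submonoid.closure (range ψ) : Set K) ⊆ span R (range ψ) := by
    intro x hx
    refine subset_span (Submonoid.closure_induction (fun _ h => h) ⟨0, map_zero_eq_one ψ⟩ ?_ hx)
    rintro _ _ _ _ ⟨μ, rfl⟩ ⟨ν, rfl⟩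
    exact ⟨μ + ν, map_add_eq_mul ψ μ ν⟩
  rw [← Algebra.adjoin_eq_span_of_subset R hclosure] at hx hy ⊢
  exact Subalgebra.mul_mem _ hx hy

theorem exists_mem_span_range_mul_eq_one_sub [CommRing K] [Algebra R K] (ψ : AddChar Λ K)
    (α : Λ) (m : ℤ) : ∃ q ∈ span R (range ψ), (1 - ψ α) * q = 1 - ψ (m • α) := by
  have hnat (n : ℕ) : (1 - ψ α) * ∑ j ∈ Finset.range n, ψ (j • α) = 1 - ψ (n • α) := by
    simp only [map_nsmul_eq_pow, mul_neg_geom_sum]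
  have hsum (n : ℕ) : ∑ j ∈ Finset.range n, ψ (j • α) ∈ span R (range ψ) :=
    sum_mem fun j _ => subset_span ⟨_, rfl⟩
  obtain ⟨n, rfl | rfl⟩ := m.eq_nat_or_neg
  · exact ⟨_, hsum n, by rw [natCast_zsmul, hnat]⟩
  · refine ⟨-ψ (-(n • α)) * ∑ j ∈ Finset.range n, ψ (j • α),
      mul_mem_span_range ψ (neg_mem (subset_span ⟨_, rfl⟩)) (hsum n), ?_⟩
    have hinv : ψ (-(n • α)) * ψ (n • α) = 1 := by
      rw [← map_add_eq_mul, neg_add_cancel, map_zero_eq_one]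
    rw [neg_smul, natCast_zsmul, mul_left_comm, hnat]
    linear_combination hinv

theorem map_mem_span_range [CommRing K] [Algebra R K] (ψ : AddChar Λ K) {g : K →ₐ[R] K}
    (hg : ∀ μ, g (ψ μ) ∈ range ψ) {f : K} (hf : f ∈ span R (range ψ)) :
    g f ∈ span R (range ψ) :=
  (map_span_le g.toLinearMap _ _).2 (by rintro _ ⟨μ, rfl⟩; exact subset_span (hg μ))
    (mem_map_of_mem hf)

theorem demazure_mem_span_range [Field K] [Algebra R K] (ψ : AddChar Λ K) {α : Λ}
    {g : K →ₐ[R] K} (n : Λ → ℤ) (hg : ∀ μ, g (ψ μ) = ψ (μ - n μ • α)) {f : K}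
    (hf : f ∈ span R (range ψ)) : demazure (ψ α) g f ∈ span R (range ψ) := by
  refine (map_span_le (demazure (ψ α) g) _ _).2 ?_ (mem_map_of_mem hf)
  rintro _ ⟨μ, rfl⟩
  obtain ⟨q, hq, hdvd⟩ := exists_mem_span_range_mul_eq_one_sub (R := R) ψ α (n μ)
  have hsplit : ψ μ = ψ (μ - n μ • α) * ψ (n μ • α) := by rw [← map_add_eq_mul, sub_add_cancel]
  have hμ : demazure (ψ α) g (ψ μ) = -ψ (μ - n μ • α) * ((1 - ψ α) * q / (1 - ψ α)) := by
    simp only [demazure, LinearMap.coe_mk, AddHom.coe_mk, hg, hdvd]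
    rw [hsplit]; ring
  rcases eq_or_ne (1 - ψ α) 0 with h | h
  · rw [hμ, h, div_zero, mul_zero]; exact zero_mem _
  · rw [hμ, mul_div_cancel_left₀ q h]
    exact mul_mem_span_range ψ (neg_mem (subset_span ⟨_, rfl⟩)) hq

end AddChar

end

theorem demWhit_preserves_groupAlgebra_general
    -- Λ: free abelian group of finite rank
    {Λ : Type*} [AddCommGroup Λ]
    -- W: finite Weyl group acting on Λ
    {W : Type*} [Group W] {r : ℕ}
    (σ : W →* Λ ≃+ Λ) (s : Fin r → W) (α : Fin r → Λ) (pair : Fin r → Λ →+ ℤ)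
    (hpair : ∀ i, pair i (α i) = 2)
    (hrefl : ∀ (i : Fin r) (μ : Λ), σ (s i) μ = μ - pair i μ • α i)
    -- K ⊇ ℂ[Λ]: the fraction field, with basis elements ζ λ = z^λ
    {K : Type*} [Field K] [Algebra ℂ K]
    (ζ : Λ → K) (hζ0 : ζ 0 = 1) (hζadd : ∀ μ ν, ζ (μ + ν) = ζ μ * ζ ν)
    (hζindep : LinearIndependent ℂ ζ)
    -- the W-action on K by ℂ-algebra automorphisms, with w·z^λ = z^{wλ}
    (τ : W →* (K ≃ₐ[ℂ] K)) (hτ : ∀ (w : W) (μ : Λ), τ w (ζ μ) = ζ (σ w μ))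
    (v : ℂ) :
    -- T_i maps the subring ℂ[Λ] = span_ℂ {z^λ} of K into itself
    ∀ i : Fin r, ∀ f ∈ Submodule.span ℂ (Set.range ζ),
      demWhit ζ τ s α v i f ∈ Submodule.span ℂ (Set.range ζ) := by
  intro i f hf
  let ψ : AddChar Λ K := ⟨ζ, hζ0, hζadd⟩
  have hreflψ (μ : Λ) : (τ (s i) : K →ₐ[ℂ] K) (ψ μ) = ψ (μ - pair i μ • α i) :=
    (hτ _ _).trans (congrArg ζ (hrefl i μ))
  have hne : ζ (α i) ≠ 1 := fun h => by
    have hα0 : α i = 0 := hζindep.injective (h.trans hζ0.symm)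
    simpa [hα0] using hpair i
  have hinv : ζ (-α i) * ζ (α i) = 1 := by rw [← hζadd, neg_add_cancel, hζ0]
  have hαψ : ψ (α i) ∈ Submodule.span ℂ (Set.range ψ) := Submodule.subset_span ⟨_, rfl⟩
  rw [demWhit_eq ζ τ s α v i hne hinv]
  have hD := ψ.demazure_mem_span_range (pair i) hreflψ hf
  have hs := ψ.map_mem_span_range (fun μ => ⟨_, (hreflψ μ).symm⟩) hf
  exact sub_mem (Submodule.smul_mem _ _ (ψ.mul_mem_span_range hαψ hD))
    (Submodule.smul_mem _ _ (ψ.mul_mem_span_range hαψ hs))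

/-- **Theorem 2.4 (iii) of "Hecke Modules from Metaplectic Ice".**
Each Demazure–Whittaker operator `T_i` maps the subring `ℂ[Λ] ⊆ K` (the `ℂ`-span of the
`z^λ`, i.e. `𝒪(T̂(ℂ))`) into itself: the numerator of `T_i f` is divisible by
`1 − z^{α_i∨}`, using that `⟨α_i, λ⟩ ∈ ℤ` for all `λ ∈ Λ` (crystallographic). -/
theorem demWhit_preserves_groupAlgebra
    -- Λ: free abelian group of finite rank
    {Λ : Type*} [AddCommGroup Λ] [Module.Free ℤ Λ] [Module.Finite ℤ Λ]
    -- W: finite Weyl group acting on Λ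
    {W : Type*} [Group W] [Fintype W] {r : ℕ}
    (σ : W →* Λ ≃+ Λ) (s : Fin r → W) (α : Fin r → Λ) (pair : Fin r → Λ →+ ℤ)
    -- Φ: the reduced crystallographic root system inside Λ
    (Φ : Set Λ) (hΦfin : Φ.Finite) (hΦneg : ∀ μ ∈ Φ, -μ ∈ Φ)
    (hΦW : ∀ (w : W), ∀ μ ∈ Φ, σ w μ ∈ Φ)
    (hΦred : ∀ μ ∈ Φ, (2 : ℤ) • μ ∉ Φ)
    (hα : ∀ i, α i ∈ Φ) (hpair : ∀ i, pair i (α i) = 2)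
    (hrefl : ∀ (i : Fin r) (μ : Λ), σ (s i) μ = μ - pair i μ • α i)
    (hs2 : ∀ i, s i * s i = 1)
    (hgen : Subgroup.closure (Set.range s) = ⊤)
    -- K ⊇ ℂ[Λ]: the fraction field, with basis elements ζ λ = z^λ
    {K : Type*} [Field K] [Algebra ℂ K]
    (ζ : Λ → K) (hζ0 : ζ 0 = 1) (hζadd : ∀ μ ν, ζ (μ + ν) = ζ μ * ζ ν)
    (hζindep : LinearIndependent ℂ ζ)
    -- the W-action on K by ℂ-algebra automorphisms, with w·z^λ = z^{wλ}
    (τ : W →* (K ≃ₐ[ℂ] K)) (hτ : ∀ (w : W) (μ : Λ), τ w (ζ μ) = ζ (σ w μ))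
    (v : ℂ) :
    -- T_i maps the subring ℂ[Λ] = span_ℂ {z^λ} of K into itself
    ∀ i : Fin r, ∀ f ∈ Submodule.span ℂ (Set.range ζ),
      demWhit ζ τ s α v i f ∈ Submodule.span ℂ (Set.range ζ) :=
  demWhit_preserves_groupAlgebra_general σ s α pair hpair hrefl ζ hζ0 hζadd hζindep τ hτ v
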